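/- arXiv:1703.06061 — 2 statements merged into one kernel-verified Lean document; each statement's English description precedes it below -/
import Mathlib

section
/- Let v_1, …, v_k be pairwise non-overlapping factors of a word u over an alphabet Γ such that no letter occurs more than once within any v_i, each |v_i| ≥ (k−3)/2, and every word of length ℓ occurs at most once among all factors of length ℓ of the v_i's combined. Then u has at least k·(⌈(k−3)/2⌉ − ℓ + 1) distinct factors of length ℓ (assuming ⌈(k−3)/2⌉ ≥ ℓ), and hence g(u) ≥ k·(⌈(k−3)/2⌉ − ℓ + 1)/ℓ. -/
/-!
Each `v i` has length at least `c = ⌈(k - 3) / 2⌉`, hence at least `c - ℓ + 1` factors of length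
`ℓ`, one per starting position, and the uniqueness hypothesis makes all `k (c - ℓ + 1)` of these
factors of `u` distinct.
Conversely, a factor of length `ℓ` of the word derived by a nonterminal either contains the first
letter of the expansion of some symbol of its right-hand side, and is then determined by that
symbol and one of `ℓ` offsets, or lies strictly inside the expansion of a smaller nonterminal,
where induction applies. Hence `u` has at most `g(u) ℓ` distinct factors of length `ℓ`.
-/

/-- A straight-line program over alphabet `α`: nonterminals `0, ..., n-1`, each with a
single nonempty right-hand side referring only to smaller nonterminals (acyclicity). -/
structure SLP (α : Type) where
  n : ℕ
  rhs : Fin n → List (Fin n ⊕ α)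
  start : Fin n
  dec : ∀ i j, Sum.inl j ∈ rhs i → (j : ℕ) < (i : ℕ)
  ne : ∀ i, rhs i ≠ []

/-- The word derived by nonterminal `i`. -/
def SLP.val {α : Type} (G : SLP α) (i : Fin G.n) : List α :=
  ((G.rhs i).attach.map (fun s =>
    match h : s.1 with
    | Sum.inl j => G.val j
    | Sum.inr a => [a])).flatten
termination_by (i : ℕ)
decreasing_by exact G.dec i _ (h ▸ s.2)

/-- The size of an SLP: total length of all right-hand sides. -/
def SLP.size {α : Type} (G : SLP α) : ℕ := ∑ i, (G.rhs i).length

def SLP.produces {α : Type} (G : SLP α) (w : List α) : Prop := G.val G.start = w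

/-- `gsize w` is the size of a smallest SLP producing `w`. -/
noncomputable def gsize {α : Type} (w : List α) : ℕ :=
  sInf {s | ∃ G : SLP α, G.produces w ∧ G.size = s}

/-- The number of occurrences (starting positions) of `x` as a factor of `w`. -/
def countOcc {σ : Type} [DecidableEq σ] (x w : List σ) : ℕ :=
  ((List.range (w.length + 1)).filter (fun i => (w.drop i).take x.length = x)).length

namespace List

variable {α : Type}

theorem take_drop_infix (w : List α) (p n : ℕ) : (w.drop p).take n <:+: w :=
  (take_prefix _ _).isInfix.trans (drop_suffix _ _).isInfix

theorem exists_eq_take_drop_of_infix {x w : List α} (h : x <:+: w) :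
    ∃ p, p + x.length ≤ w.length ∧ (w.drop p).take x.length = x := by
  obtain ⟨s, t, rfl⟩ := h
  exact ⟨s.length, by simp, by simp⟩

theorem finite_setOf_infix (u : List α) : {x : List α | x <:+: u}.Finite :=
  u.sublists.finite_toSet.subset fun _ hx => mem_sublists.mpr hx.sublist

-- `(L.take t).flatten.length` is the position in `L.flatten` at which the block `L[t]` starts.
theorem window_flatten_covers_start_or_infix (L : List (List α)) {p ℓ : ℕ} (hℓ : 0 < ℓ)
    (hp : p + ℓ ≤ L.flatten.length) :
    (∃ t < L.length, p ≤ (L.take t).flatten.length ∧ (L.take t).flatten.length < p + ℓ) ∨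
    ∃ y ∈ L, 1 < y.length ∧ (L.flatten.drop p).take ℓ <:+: y := by
  induction L generalizing p with
  | nil => simp only [flatten_nil, length_nil] at hp; omega
  | cons a L ih =>
    rw [flatten_cons, length_append] at hp
    rcases Nat.eq_zero_or_pos p with rfl | hp0
    · exact .inl ⟨0, by simp, by simp, by simpa using hℓ⟩
    rcases lt_or_ge p a.length with hpa | hpa
    · rcases le_or_gt (p + ℓ) a.length with hin | hcross
      · refine .inr ⟨a, mem_cons_self, by omega, ?_⟩
        rw [flatten_cons, drop_append_of_le_length hpa.le,
          take_append_of_le_length (by rw [length_drop]; omega)]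
        exact take_drop_infix a p ℓ
      · have hL : L ≠ [] := by rintro rfl; simp only [flatten_nil, length_nil] at hp; omega
        refine .inl ⟨1, by simpa [Nat.one_lt_succ_succ] using length_pos_iff.mpr hL, ?_⟩
        simp only [take_succ_cons, take_zero, flatten_cons, flatten_nil, append_nil]
        omega
    · rcases ih (p := p - a.length) (by omega) with ⟨t, ht, h1, h2⟩ | ⟨y, hy, hy1, hy2⟩
      · refine .inl ⟨t + 1, by simpa using ht, ?_⟩
        rw [take_succ_cons, flatten_cons, length_append]
        omega
      · refine .inr ⟨y, mem_cons_of_mem a hy, hy1, ?_⟩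
        rwa [flatten_cons, drop_append, drop_eq_nil_of_le hpa, nil_append]

end List

namespace SLP

variable {α : Type} (G : SLP α)

def symbolVal : Fin G.n ⊕ α → List α
  | .inl j => G.val j
  | .inr a => [a]

theorem val_eq_flatten (i : Fin G.n) : G.val i = ((G.rhs i).map G.symbolVal).flatten := by
  rw [val, ← List.attach_map_val (l := G.rhs i) (f := G.symbolVal)]
  congr 1
  refine List.map_congr_left fun s _ => ?_
  split <;> rename_i h <;> simp [symbolVal, h]

/-- `G.boundaryWindow ℓ ⟨i, t, d⟩` is the factor of length `ℓ` of `G.val i` that starts `d`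
letters before the expansion of the `t`-th symbol of `G.rhs i`. -/
def boundaryWindow (ℓ : ℕ) (w : Σ i : Fin G.n, Fin (G.rhs i).length × Fin ℓ) : List α :=
  ((G.val w.1).drop
    ((((G.rhs w.1).map G.symbolVal).take w.2.1).flatten.length - w.2.2)).take ℓ

theorem mem_range_boundaryWindow {ℓ : ℕ} (hℓ : 0 < ℓ) (i : Fin G.n) {x : List α}
    (hx : x.length = ℓ) (h : x <:+: G.val i) : x ∈ Set.range (G.boundaryWindow ℓ) := by
  induction i using WellFoundedLT.induction generalizing x with
  | _ i ih =>
  obtain ⟨p, hp, hxp⟩ := List.exists_eq_take_drop_of_infix h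
  rw [hx] at hp hxp
  subst hxp
  rw [G.val_eq_flatten] at hp
  rcases List.window_flatten_covers_start_or_infix _ hℓ hp with
    ⟨t, ht, h1, h2⟩ | ⟨y, hy, hy1, hxy⟩
  · refine ⟨⟨i, ⟨t, by simpa using ht⟩,
      ⟨(((G.rhs i).map G.symbolVal).take t).flatten.length - p, by omega⟩⟩, ?_⟩
    simp only [boundaryWindow]
    congr 2
    omega
  · obtain ⟨s, hs, rfl⟩ := List.mem_map.mp hy
    rw [← G.val_eq_flatten] at hxy
    cases s with
    | inl j => exact ih j (G.dec i j hs) hx hxy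
    | inr a => simp [symbolVal] at hy1

theorem ncard_factors_le {ℓ : ℕ} (hℓ : 0 < ℓ) (i : Fin G.n) :
    {x : List α | x.length = ℓ ∧ x <:+: G.val i}.ncard ≤ G.size * ℓ :=
  calc {x : List α | x.length = ℓ ∧ x <:+: G.val i}.ncard
      ≤ (Set.range (G.boundaryWindow ℓ)).ncard :=
        Set.ncard_le_ncard (fun _ hx => G.mem_range_boundaryWindow hℓ i hx.1 hx.2)
          (Set.finite_range _)
    _ ≤ Nat.card (Σ i : Fin G.n, Fin (G.rhs i).length × Fin ℓ) :=
        (Nat.card_coe_set_eq _).symm.trans_le (Finite.card_range_le _)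
    _ = G.size * ℓ := by simp [size, Finset.sum_mul]

def ofWord (u : List α) (hu : u ≠ []) : SLP α where
  n := 1
  rhs _ := u.map .inr
  start := 0
  dec := by simp
  ne := by simpa

theorem ofWord_produces {u : List α} (hu : u ≠ []) : (ofWord u hu).produces u := by
  rw [produces, val_eq_flatten]
  simp only [ofWord, List.map_map]
  exact List.flatMap_singleton' u

end SLP

-- SLPs derive only nonempty words; `gsize [] = sInf ∅ = 0`.
theorem exists_produces_size_eq_gsize {α : Type} {u : List α} (hu : u ≠ []) :
    ∃ G : SLP α, G.produces u ∧ G.size = gsize u :=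
  Nat.sInf_mem (s := {s | ∃ G : SLP α, G.produces u ∧ G.size = s})
    ⟨_, SLP.ofWord u hu, SLP.ofWord_produces hu, rfl⟩

theorem ncard_factors_le_gsize_mul {α : Type} {u : List α} (hu : u ≠ []) {ℓ : ℕ}
    (hℓ : 0 < ℓ) :
    {x : List α | x.length = ℓ ∧ x <:+: u}.ncard ≤ gsize u * ℓ := by
  obtain ⟨G, hG, hsize⟩ := exists_produces_size_eq_gsize hu
  rw [← hsize, ← hG]
  exact G.ncard_factors_le hℓ G.start

section FactorCount

variable {Γ : Type} [DecidableEq Γ]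

theorem countOcc_eq_card (x w : List Γ) :
    countOcc x w =
      ((Finset.range (w.length + 1)).filter fun p => (w.drop p).take x.length = x).card :=
  rfl

theorem eq_of_sum_countOcc_le_one {ι : Type} {s : Finset ι} {v : ι → List Γ} {x : List Γ}
    (h : ∑ i ∈ s, countOcc x (v i) ≤ 1) {i j : ι} {p q : ℕ} (hi : i ∈ s) (hj : j ∈ s)
    (hp : p ≤ (v i).length) (hq : q ≤ (v j).length)
    (hpx : ((v i).drop p).take x.length = x) (hqx : ((v j).drop q).take x.length = x) :
    i = j ∧ p = q := by
  simp only [countOcc_eq_card, ← Finset.card_sigma] at h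
  have := Finset.card_le_one.mp h
    ⟨i, p⟩ (by simpa [hi, hpx, Nat.lt_succ_iff] using hp)
    ⟨j, q⟩ (by simpa [hj, hqx, Nat.lt_succ_iff] using hq)
  simpa using this

theorem card_mul_le_ncard_factors {ι : Type} (s : Finset ι) (v : ι → List Γ) {u : List Γ}
    {c ℓ : ℕ} (hv : ∀ i ∈ s, v i <:+: u) (hlen : ∀ i ∈ s, c ≤ (v i).length)
    (hℓc : ℓ ≤ c)
    (huniq : ∀ x : List Γ, x.length = ℓ → ∑ i ∈ s, countOcc x (v i) ≤ 1) :
    s.card * (c - ℓ + 1) ≤ {x : List Γ | x.length = ℓ ∧ x <:+: u}.ncard := by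
  set window : ι × ℕ → List Γ := fun a => ((v a.1).drop a.2).take ℓ
  set P := s ×ˢ Finset.range (c - ℓ + 1)
  have hP : ∀ a ∈ P, a.1 ∈ s ∧ a.2 + ℓ ≤ (v a.1).length := fun a ha => by
    obtain ⟨h1, h2⟩ := Finset.mem_product.mp ha
    have := hlen a.1 h1
    exact ⟨h1, by rw [Finset.mem_range] at h2; omega⟩
  have hlen_window : ∀ a ∈ P, (window a).length = ℓ := fun a ha => by
    have := (hP a ha).2
    simp only [window, List.length_take, List.length_drop]
    omega
  rw [← Finset.card_range (c - ℓ + 1), ← Finset.card_product, ← Set.ncard_coe_finset]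
  refine Set.ncard_le_ncard_of_injOn window
    (fun a ha => ⟨hlen_window a ha, (List.take_drop_infix _ _ _).trans (hv a.1 (hP a ha).1)⟩)
    (fun a ha b hb hab => ?_) ((List.finite_setOf_infix u).subset fun _ hx => hx.2)
  have hxa := hlen_window a ha
  obtain ⟨hij, hpq⟩ := eq_of_sum_countOcc_le_one (huniq _ hxa) (p := a.2) (q := b.2)
    (hP a ha).1 (hP b hb).1
    (by have := (hP a ha).2; omega) (by have := (hP b hb).2; omega)
    (by rw [hxa]) (by rw [hxa, hab])
  exact Prod.ext hij hpq

end FactorCount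

theorem repair_stmt_9_general {Γ : Type} [DecidableEq Γ] (u : List Γ) (k ℓ : ℕ)
    (hℓ : 1 ≤ ℓ) (v : ℕ → List Γ) (pos : ℕ → ℕ)
    (hocc : ∀ i, 1 ≤ i → i ≤ k → (u.drop (pos i)).take (v i).length = v i)
    (hlen : ∀ i, 1 ≤ i → i ≤ k → k - 3 ≤ 2 * (v i).length)
    (huniq : ∀ x : List Γ, x.length = ℓ → (∑ i ∈ Finset.Icc 1 k, countOcc x (v i)) ≤ 1)
    (hc : ℓ ≤ (k - 2) / 2) :
    k * ((k - 2) / 2 - ℓ + 1) ≤ {x : List Γ | x.length = ℓ ∧ x <:+: u}.ncard ∧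
    k * ((k - 2) / 2 - ℓ + 1) ≤ gsize u * ℓ := by
  have hinfix : ∀ i ∈ Finset.Icc 1 k, v i <:+: u := fun i hi => by
    obtain ⟨h1, h2⟩ := Finset.mem_Icc.mp hi
    rw [← hocc i h1 h2]
    exact List.take_drop_infix _ _ _
  have hvlen : ∀ i ∈ Finset.Icc 1 k, (k - 2) / 2 ≤ (v i).length := fun i hi => by
    obtain ⟨h1, h2⟩ := Finset.mem_Icc.mp hi
    have := hlen i h1 h2
    omega
  have hfactors :
      k * ((k - 2) / 2 - ℓ + 1) ≤ {x : List Γ | x.length = ℓ ∧ x <:+: u}.ncard := by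
    simpa using card_mul_le_ncard_factors _ v hinfix hvlen hc huniq
  have hu : u ≠ [] := by
    have h1 : 1 ∈ Finset.Icc 1 k := Finset.mem_Icc.mpr ⟨le_rfl, by omega⟩
    have := (hinfix 1 h1).length_le
    have := hvlen 1 h1
    exact List.ne_nil_of_length_pos (by omega)
  exact ⟨hfactors, hfactors.trans (ncard_factors_le_gsize_mul hu hℓ)⟩

/-- If `v 1, …, v k` are pairwise non-overlapping factors of `u` (occurring at positions
`pos i`), no letter repeats inside any `v i`, each `|v i| ≥ (k-3)/2`, and every word of
length `ℓ` occurs at most once among all factors of length `ℓ` of the `v i` combined,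
then (with `c = ⌈(k-3)/2⌉ = (k-2)/2`, assuming `ℓ ≤ c`) `u` has at least
`k·(c - ℓ + 1)` distinct factors of length `ℓ`, and hence `g(u) ≥ k·(c - ℓ + 1)/ℓ`. -/
theorem repair_stmt_9 {Γ : Type} [DecidableEq Γ] (u : List Γ) (k ℓ : ℕ)
    (hk : 3 ≤ k) (hℓ : 1 ≤ ℓ) (v : ℕ → List Γ) (pos : ℕ → ℕ)
    (hocc : ∀ i, 1 ≤ i → i ≤ k → (u.drop (pos i)).take (v i).length = v i)
    (hdisj : ∀ i j, 1 ≤ i → i < j → j ≤ k → pos i + (v i).length ≤ pos j)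
    (hnodup : ∀ i, 1 ≤ i → i ≤ k → (v i).Nodup)
    (hlen : ∀ i, 1 ≤ i → i ≤ k → k - 3 ≤ 2 * (v i).length)
    (huniq : ∀ x : List Γ, x.length = ℓ → (∑ i ∈ Finset.Icc 1 k, countOcc x (v i)) ≤ 1)
    (hc : ℓ ≤ (k - 2) / 2) :
    k * ((k - 2) / 2 - ℓ + 1) ≤ {x : List Γ | x.length = ℓ ∧ x <:+: u}.ncard ∧
    k * ((k - 2) / 2 - ℓ + 1) ≤ gsize u * ℓ :=
  repair_stmt_9_general u k ℓ hℓ v pos hocc hlen huniq hc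
end

section
/- Let s_k = (∏_{i=1}^{k-1} a^{N_i} b) a^{N_k} where N_1 < N_2 < ⋯ < N_k and 2^{k+i−1} ≤ N_i < 2^{k+i}. During the first k−1 rounds of RePair on input s_k, the chosen maximal string is always a digram over {a, X_1, …, X_{k−2}} and RePair introduces exactly the rules X_1 → aa and X_i → X_{i−1}X_{i−1} for 2 ≤ i ≤ k−1; in particular the letter b, which occurs only k−1 times, never participates in a replaced maximal string in these rounds. -/
/-- Symbols appearing in RePair's grammars: nonterminals (numbered) or terminals. -/
abbrev RSym (α : Type) := ℕ ⊕ α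

/-- A grammar in RePair's working representation: the list of right-hand sides, where the
rule at position `i` is the rule of nonterminal `i` and the start nonterminal is `0`. -/
abbrev Grammar (α : Type) := List (List (RSym α))

def countNOAux {σ : Type} [DecidableEq σ] (γ : List σ) : ℕ → List σ → ℕ
  | 0, _ => 0
  | fuel + 1, w =>
    if w = [] then 0
    else if γ <+: w then 1 + countNOAux γ fuel (w.drop γ.length)
    else countNOAux γ fuel w.tail

/-- The maximal number of pairwise non-overlapping occurrences of `γ` (with `|γ| ≥ 1`)
in `w`, computed by the left-to-right greedy strategy. -/
def countNO {σ : Type} [DecidableEq σ] (γ w : List σ) : ℕ := countNOAux γ w.length w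

def replaceNOAux {σ : Type} [DecidableEq σ] (γ : List σ) (X : σ) : ℕ → List σ → List σ
  | 0, w => w
  | _ + 1, [] => []
  | fuel + 1, s :: tl =>
    if γ <+: (s :: tl) then X :: replaceNOAux γ X fuel ((s :: tl).drop γ.length)
    else s :: replaceNOAux γ X fuel tl

/-- Replace the non-overlapping occurrences of `γ` in `w`, left to right, by `X`. -/
def replaceNO {σ : Type} [DecidableEq σ] (γ : List σ) (X : σ) (w : List σ) : List σ :=
  replaceNOAux γ X w.length w

/-- The number of pairwise non-overlapping occurrences of `γ` in the right-hand sides. -/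
def freq {α : Type} [DecidableEq α] (G : Grammar α) (γ : List (RSym α)) : ℕ :=
  (G.map (countNO γ)).sum

/-- `γ` is a maximal string of `G`: it has length at least two, occurs at least twice
without overlap, and no strictly longer word occurs at least as many times. -/
def IsMaxStr {α : Type} [DecidableEq α] (G : Grammar α) (γ : List (RSym α)) : Prop :=
  2 ≤ γ.length ∧ 2 ≤ freq G γ ∧ ∀ δ, γ.length < δ.length → freq G δ < freq G γ

/-- One round of RePair: pick a most frequent maximal string `γ`, replace its occurrences
left to right by the fresh nonterminal `G.length`, and append the new rule `X → γ`. -/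
def RePairStep {α : Type} [DecidableEq α] (G G' : Grammar α) : Prop :=
  ∃ γ, IsMaxStr G γ ∧ (∀ δ, IsMaxStr G δ → freq G δ ≤ freq G γ) ∧
    G' = (G.map (fun r => replaceNO γ (Sum.inl G.length) r)) ++ [γ]

/-- `RePairSteps r G G'`: `G'` is obtained from `G` by `r` rounds of RePair. -/
inductive RePairSteps {α : Type} [DecidableEq α] : ℕ → Grammar α → Grammar α → Prop
  | refl (G) : RePairSteps 0 G G
  | tail {n : ℕ} {G₁ G₂ G₃ : Grammar α} :
      RePairSteps n G₁ G₂ → RePairStep G₂ G₃ → RePairSteps (n + 1) G₁ G₃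

/-- The initial grammar `S → w`. -/
def RePairInit {α : Type} (w : List α) : Grammar α := [w.map Sum.inr]

/-- `G` is an output of RePair on input `w`: reachable from `S → w` by rounds of RePair,
with no maximal string left. -/
def RePairRun {α : Type} [DecidableEq α] (w : List α) (G : Grammar α) : Prop :=
  (∃ n, RePairSteps n (RePairInit w) G) ∧ ∀ γ, ¬ IsMaxStr G γ

/-- The size of a grammar: total length of all right-hand sides. -/
def gramSize {α : Type} (G : Grammar α) : ℕ := (G.map List.length).sum

/-- The word `a^{N 1} b a^{N 2} b ... b a^{N k}` over the alphabet `Fin 2`,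
with `a = 0` and `b = 1`. -/
def blockWord (N : ℕ → ℕ) (k : ℕ) : List (Fin 2) :=
  ((List.range (k - 1)).flatMap (fun j => List.replicate (N (j + 1)) 0 ++ [1])) ++
    List.replicate (N k) 0

/-!
After `r` rounds every block `a ^ n` reads `X_r ^ (n / 2 ^ r)` followed by the binary digits of
`n` below `2 ^ r` (one symbol `X_t`, with `X_0 = a`, per nonzero digit), and the rules so far are
`X_(t+1) → X_t X_t`. In the next round the digram `X_r X_r` occurs
`F = ∑ N_j / 2 ^ (r + 1) ≥ 2 (k - 1) + 4` times without overlap, whereas every other symbol occurs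
at most `k + 2` times in the whole grammar and `X_r` itself fewer than `3 F` times. So a candidate
containing another symbol, or a run of three or more `X_r`, is strictly rarer, RePair must replace
`X_r X_r`, and the grammar keeps the same shape one level up.
-/

-- Core has `BEq (α ⊕ β)` but not its lawfulness, and `List.count` on `RSym α` goes through it.
instance {α β : Type*} [BEq α] [BEq β] [ReflBEq α] [ReflBEq β] : ReflBEq (α ⊕ β) where
  rfl {a} := by rcases a with a | a <;> exact (BEq.rfl : (a == a) = true)

instance {α β : Type*} [BEq α] [BEq β] [LawfulBEq α] [LawfulBEq β] : LawfulBEq (α ⊕ β) where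
  eq_of_beq {a b} h := by
    cases a <;> cases b <;>
      first | exact congrArg _ (eq_of_beq h) | exact absurd h Bool.false_ne_true

section Greedy

variable {σ : Type} [DecidableEq σ] {γ : List σ}

@[simp] theorem countNO_nil : countNO γ [] = 0 := rfl

@[simp] theorem replaceNO_nil (X : σ) : replaceNO γ X [] = [] := rfl

theorem countNOAux_nil (f : ℕ) : countNOAux γ f [] = 0 := by
  cases f <;> simp [countNOAux]

theorem countNOAux_congr_fuel (hγ : γ ≠ []) :
    ∀ {f g : ℕ} {w : List σ}, w.length ≤ f → w.length ≤ g →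
      countNOAux γ f w = countNOAux γ g w
  | 0, _, w, hf, _ => by rw [List.eq_nil_of_length_eq_zero (Nat.le_zero.mp hf), countNOAux_nil,
      countNOAux_nil]
  | _ + 1, 0, w, _, hg => by rw [List.eq_nil_of_length_eq_zero (Nat.le_zero.mp hg),
      countNOAux_nil, countNOAux_nil]
  | f + 1, g + 1, w, hf, hg => by
    have hlen : 0 < γ.length := List.length_pos_iff.mpr hγ
    have hdrop : (w.drop γ.length).length ≤ f ∧ (w.drop γ.length).length ≤ g := by
      simp only [List.length_drop]; omega
    have htail : w.tail.length ≤ f ∧ w.tail.length ≤ g := by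
      simp only [List.length_tail]; omega
    simp only [countNOAux]
    split_ifs
    · rfl
    · rw [countNOAux_congr_fuel hγ hdrop.1 hdrop.2]
    · rw [countNOAux_congr_fuel hγ htail.1 htail.2]

theorem countNO_of_prefix (hγ : γ ≠ []) {w : List σ} (h : γ <+: w) :
    countNO γ w = countNO γ (w.drop γ.length) + 1 := by
  have hw : w ≠ [] := by rintro rfl; exact hγ (List.prefix_nil.mp h)
  obtain ⟨s, t, rfl⟩ := List.exists_cons_of_ne_nil hw
  have hlen : 0 < γ.length := List.length_pos_iff.mpr hγ
  rw [countNO, List.length_cons, countNOAux, if_neg hw, if_pos h, countNO,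
    countNOAux_congr_fuel hγ (by simp; omega) le_rfl, Nat.add_comm]

theorem countNO_cons_of_not_prefix {s : σ} {w : List σ} (h : ¬γ <+: s :: w) :
    countNO γ (s :: w) = countNO γ w := by
  have hγ : γ ≠ [] := by rintro rfl; exact h (List.nil_prefix)
  rw [countNO, List.length_cons, countNOAux, if_neg (List.cons_ne_nil s w), if_neg h]
  exact countNOAux_congr_fuel hγ (by simp) le_rfl

theorem replaceNOAux_congr_fuel (hγ : γ ≠ []) (X : σ) :
    ∀ {f g : ℕ} {w : List σ}, w.length ≤ f → w.length ≤ g →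
      replaceNOAux γ X f w = replaceNOAux γ X g w
  | 0, 0, w, _, _ => rfl
  | 0, _ + 1, w, hf, _ => by rw [List.eq_nil_of_length_eq_zero (Nat.le_zero.mp hf)]; rfl
  | _ + 1, 0, w, _, hg => by rw [List.eq_nil_of_length_eq_zero (Nat.le_zero.mp hg)]; rfl
  | _ + 1, _ + 1, [], _, _ => rfl
  | f + 1, g + 1, s :: w, hf, hg => by
    have hlen : 0 < γ.length := List.length_pos_iff.mpr hγ
    have hdrop : ((s :: w).drop γ.length).length ≤ f ∧ ((s :: w).drop γ.length).length ≤ g := by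
      simp only [List.length_drop, List.length_cons] at *; omega
    simp only [List.length_cons] at hf hg
    simp only [replaceNOAux]
    split_ifs
    · rw [replaceNOAux_congr_fuel hγ X hdrop.1 hdrop.2]
    · rw [replaceNOAux_congr_fuel hγ X (Nat.le_of_succ_le_succ hf) (Nat.le_of_succ_le_succ hg)]

theorem replaceNO_of_prefix (hγ : γ ≠ []) (X : σ) {s : σ} {w : List σ} (h : γ <+: s :: w) :
    replaceNO γ X (s :: w) = X :: replaceNO γ X ((s :: w).drop γ.length) := by
  have hlen : 0 < γ.length := List.length_pos_iff.mpr hγ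
  rw [replaceNO, List.length_cons, replaceNOAux, if_pos h, replaceNO,
    replaceNOAux_congr_fuel hγ X (by simp; omega) le_rfl]

theorem replaceNO_cons_of_not_prefix (X : σ) {s : σ} {w : List σ} (h : ¬γ <+: s :: w) :
    replaceNO γ X (s :: w) = s :: replaceNO γ X w := by
  have hγ : γ ≠ [] := by rintro rfl; exact h (List.nil_prefix)
  rw [replaceNO, List.length_cons, replaceNOAux, if_neg h, replaceNO,
    replaceNOAux_congr_fuel hγ X le_rfl le_rfl]

theorem countNOAux_mul_count_le [BEq σ] (x : σ) :
    ∀ (f : ℕ) (w : List σ), countNOAux γ f w * γ.count x ≤ w.count x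
  | 0, w => by simp [countNOAux]
  | f + 1, w => by
    rw [countNOAux]
    split_ifs with hw hp
    · simp
    · obtain ⟨t, rfl⟩ := hp
      rw [List.drop_left, List.count_append, Nat.add_mul, one_mul]
      have := countNOAux_mul_count_le x f t
      omega
    · exact (countNOAux_mul_count_le x f w.tail).trans
        ((List.tail_sublist w).count_le x)

theorem countNO_mul_count_le [BEq σ] (x : σ) (w : List σ) : countNO γ w * γ.count x ≤ w.count x :=
  countNOAux_mul_count_le x _ w

end Greedy

section Digram

variable {σ : Type} {c : σ}

theorem not_pair_prefix_cons {w : List σ} (hw : w.head? ≠ some c) : ¬[c, c] <+: c :: w := by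
  rcases w with _ | ⟨d, w⟩
  · simp
  · simp only [List.head?_cons, ne_eq, Option.some.injEq] at hw
    simp [List.cons_prefix_cons, Ne.symm hw]

variable [DecidableEq σ]

theorem countNO_cons_append_of_not_mem (γ : List σ) {u : List σ} (hu : c ∉ u) (w : List σ) :
    countNO (c :: γ) (u ++ w) = countNO (c :: γ) w := by
  induction u with
  | nil => rfl
  | cons d u ih =>
    rw [List.mem_cons, not_or] at hu
    rw [List.cons_append, countNO_cons_of_not_prefix (by simp [List.cons_prefix_cons, hu.1]),
      ih hu.2]

theorem replaceNO_cons_append_of_not_mem (γ : List σ) (X : σ) {u : List σ} (hu : c ∉ u)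
    (w : List σ) : replaceNO (c :: γ) X (u ++ w) = u ++ replaceNO (c :: γ) X w := by
  induction u with
  | nil => rfl
  | cons d u ih =>
    rw [List.mem_cons, not_or] at hu
    rw [List.cons_append, replaceNO_cons_of_not_prefix X
      (by simp [List.cons_prefix_cons, hu.1]), ih hu.2, List.cons_append]

theorem countNO_pair_replicate_append {w : List σ} (hw : w.head? ≠ some c) :
    ∀ m, countNO [c, c] (List.replicate m c ++ w) = m / 2 + countNO [c, c] w
  | 0 => by simp
  | 1 => by
    rw [List.replicate_one, List.singleton_append, countNO_cons_of_not_prefix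
      (not_pair_prefix_cons hw), Nat.zero_add]
  | m + 2 => by
    have hsplit : List.replicate (m + 2) c ++ w = c :: c :: (List.replicate m c ++ w) := by
      simp [List.replicate_succ]
    rw [hsplit, countNO_of_prefix (List.cons_ne_nil _ _) (by simp [List.cons_prefix_cons])]
    simp only [List.length_cons, List.length_nil, List.drop_succ_cons, List.drop_zero]
    rw [countNO_pair_replicate_append hw m]
    omega

theorem replaceNO_pair_replicate_append (X : σ) {w : List σ} (hw : w.head? ≠ some c) :
    ∀ m, replaceNO [c, c] X (List.replicate m c ++ w) =
      List.replicate (m / 2) X ++ List.replicate (m % 2) c ++ replaceNO [c, c] X w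
  | 0 => by simp
  | 1 => by
    rw [List.replicate_one, List.singleton_append, replaceNO_cons_of_not_prefix X
      (not_pair_prefix_cons hw)]
    simp
  | m + 2 => by
    have hsplit : List.replicate (m + 2) c ++ w = c :: c :: (List.replicate m c ++ w) := by
      simp [List.replicate_succ]
    rw [hsplit, replaceNO_of_prefix (List.cons_ne_nil _ _) X (by simp [List.cons_prefix_cons])]
    simp only [List.length_cons, List.length_nil, List.drop_succ_cons, List.drop_zero]
    rw [replaceNO_pair_replicate_append X hw m, show (m + 2) / 2 = m / 2 + 1 by omega,
      show (m + 2) % 2 = m % 2 by omega, List.replicate_succ]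
    simp

end Digram

section Frequency

variable {α : Type} [DecidableEq α]

theorem freq_mul_count_le (G : Grammar α) (δ : List (RSym α)) (x : RSym α) :
    freq G δ * δ.count x ≤ G.flatten.count x := by
  induction G with
  | nil => simp [freq]
  | cons w G ih =>
    simp only [freq, List.map_cons, List.sum_cons, List.flatten_cons, List.count_append,
      Nat.add_mul] at *
    exact Nat.add_le_add (countNO_mul_count_le x w) ih

/-- A word containing a letter `x ≠ c` occurs at most `count x` times, and a run of `j ≥ 3`
letters `c` at most `count c / 3` times. -/
theorem freq_lt_freq_pair {G : Grammar α} {c : RSym α}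
    (hc : G.flatten.count c < 3 * freq G [c, c])
    (hother : ∀ x, x ≠ c → G.flatten.count x < freq G [c, c])
    {δ : List (RSym α)} (hδ : 2 ≤ δ.length) (hne : δ ≠ [c, c]) :
    freq G δ < freq G [c, c] := by
  by_cases hall : ∀ x ∈ δ, x = c
  · have hlen : 3 ≤ δ.length := by
      rcases δ with _ | ⟨x, _ | ⟨y, _ | ⟨z, δ⟩⟩⟩
      · simp at hδ
      · simp at hδ
      · exact absurd (by rw [hall x (by simp), hall y (by simp)]) hne
      · simp
    have hcount : δ.count c = δ.length := List.count_eq_length.mpr fun x hx => (hall x hx).symm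
    have := freq_mul_count_le G δ c
    rw [hcount] at this
    nlinarith
  · push Not at hall
    obtain ⟨x, hx, hxc⟩ := hall
    have := freq_mul_count_le G δ x
    have hpos := List.count_pos_iff.mpr hx
    nlinarith [hother x hxc]

theorem RePairStep.eq_replace_pair {G G' : Grammar α} {c : RSym α}
    (hc : G.flatten.count c < 3 * freq G [c, c])
    (hother : ∀ x, x ≠ c → G.flatten.count x < freq G [c, c])
    (htwo : 2 ≤ freq G [c, c]) (h : RePairStep G G') :
    G' = G.map (replaceNO [c, c] (Sum.inl G.length)) ++ [[c, c]] := by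
  obtain ⟨γ, hγ, hbest, rfl⟩ := h
  have hmax : IsMaxStr G [c, c] := ⟨le_rfl, htwo, fun δ hδ =>
    freq_lt_freq_pair hc hother (by simp at hδ; omega) (by rintro rfl; simp at hδ)⟩
  by_cases hγc : γ = [c, c]
  · rw [hγc]
  · exact absurd (hbest _ hmax) (not_le.mpr (freq_lt_freq_pair hc hother hγ.1 hγc))

theorem RePairSteps.eq_of_forced {f : ℕ → Grammar α} {n : ℕ}
    (hf : ∀ r < n, ∀ G', RePairStep (f r) G' → G' = f (r + 1)) {r : ℕ} {G : Grammar α}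
    (hr : r ≤ n) (h : RePairSteps r (f 0) G) : G = f r := by
  generalize hG₀ : f 0 = G₀ at h
  induction h with
  | refl => exact hG₀.symm
  | tail _ hstep ih => exact hf _ (by omega) _ (ih (by omega) hG₀ ▸ hstep)

end Frequency

section Representation

/-- `powSym t` derives `a ^ 2 ^ t`. -/
def powSym (t : ℕ) : RSym (Fin 2) := if t = 0 then Sum.inr 0 else Sum.inl t

theorem powSym_injective : Function.Injective powSym := by
  intro s t h
  unfold powSym at h
  split_ifs at h <;> simp_all

theorem powSym_ne_sep (t : ℕ) : powSym t ≠ Sum.inr 1 := by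
  unfold powSym; split_ifs <;> simp

def lowDigits (n : ℕ) : ℕ → List (RSym (Fin 2))
  | 0 => []
  | r + 1 => List.replicate (n / 2 ^ r % 2) (powSym r) ++ lowDigits n r

/-- After `r` rounds RePair has rewritten the block `a ^ n` into `blockRep r n`. -/
def blockRep (r n : ℕ) : List (RSym (Fin 2)) :=
  List.replicate (n / 2 ^ r) (powSym r) ++ lowDigits n r

def roundWord (r : ℕ) (L : List ℕ) (m : ℕ) : List (RSym (Fin 2)) :=
  (L.flatMap fun n => blockRep r n ++ [Sum.inr 1]) ++ blockRep r m

def doublingRules (r : ℕ) : Grammar (Fin 2) :=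
  (List.range r).map fun j => [powSym j, powSym j]

def roundGrammar (r : ℕ) (L : List ℕ) (m : ℕ) : Grammar (Fin 2) :=
  roundWord r L m :: doublingRules r

theorem exists_powSym_of_mem_lowDigits {n r : ℕ} {x : RSym (Fin 2)} (hx : x ∈ lowDigits n r) :
    ∃ t < r, powSym t = x := by
  induction r with
  | zero => simp [lowDigits] at hx
  | succ r ih =>
    rcases List.mem_append.mp hx with hx | hx
    · exact ⟨r, r.lt_succ_self, (List.eq_of_mem_replicate hx).symm⟩
    · obtain ⟨t, ht, rfl⟩ := ih hx
      exact ⟨t, by omega, rfl⟩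

theorem powSym_not_mem_lowDigits {n r s : ℕ} (h : r ≤ s) : powSym s ∉ lowDigits n r := by
  intro hs
  obtain ⟨t, ht, heq⟩ := exists_powSym_of_mem_lowDigits hs
  exact absurd (powSym_injective heq) (by omega)

theorem sep_not_mem_lowDigits {n r : ℕ} : Sum.inr 1 ∉ lowDigits n r := by
  intro hs
  obtain ⟨t, -, heq⟩ := exists_powSym_of_mem_lowDigits hs
  exact powSym_ne_sep t heq

theorem nodup_lowDigits (n r : ℕ) : (lowDigits n r).Nodup := by
  induction r with
  | zero => exact List.nodup_nil
  | succ r ih =>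
    refine List.Nodup.append ?_ ih ?_
    · exact List.nodup_replicate.mpr (by omega)
    · intro x hx hx'
      rw [List.eq_of_mem_replicate hx] at hx'
      exact powSym_not_mem_lowDigits le_rfl hx'

theorem head?_lowDigits_append_ne {n r : ℕ} {w : List (RSym (Fin 2))}
    (hw : w.head? ≠ some (powSym r)) : (lowDigits n r ++ w).head? ≠ some (powSym r) := by
  rcases h : lowDigits n r with _ | ⟨d, u⟩
  · simpa using hw
  · have hd : d ∈ lowDigits n r := h ▸ List.mem_cons_self
    simp only [List.cons_append, List.head?_cons, ne_eq, Option.some.injEq]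
    rintro rfl
    exact powSym_not_mem_lowDigits le_rfl hd

theorem div_two_pow_succ (n r : ℕ) : n / 2 ^ r / 2 = n / 2 ^ (r + 1) := by
  rw [Nat.div_div_eq_div_mul, pow_succ]

theorem countNO_blockRep_append {r n : ℕ} {w : List (RSym (Fin 2))}
    (hw : w.head? ≠ some (powSym r)) :
    countNO [powSym r, powSym r] (blockRep r n ++ w) =
      n / 2 ^ (r + 1) + countNO [powSym r, powSym r] w := by
  rw [blockRep, List.append_assoc,
    countNO_pair_replicate_append (head?_lowDigits_append_ne hw),
    countNO_cons_append_of_not_mem _ (powSym_not_mem_lowDigits le_rfl), div_two_pow_succ]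

theorem replaceNO_blockRep_append {r n : ℕ} {w : List (RSym (Fin 2))}
    (hw : w.head? ≠ some (powSym r)) :
    replaceNO [powSym r, powSym r] (powSym (r + 1)) (blockRep r n ++ w) =
      blockRep (r + 1) n ++ replaceNO [powSym r, powSym r] (powSym (r + 1)) w := by
  rw [blockRep, List.append_assoc,
    replaceNO_pair_replicate_append _ (head?_lowDigits_append_ne hw),
    replaceNO_cons_append_of_not_mem _ _ (powSym_not_mem_lowDigits le_rfl), div_two_pow_succ,
    blockRep, lowDigits]
  simp only [List.append_assoc]

theorem count_blockRep_self (r n : ℕ) : (blockRep r n).count (powSym r) = n / 2 ^ r := by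
  rw [blockRep, List.count_append, List.count_replicate_self,
    List.count_eq_zero.mpr (powSym_not_mem_lowDigits le_rfl), Nat.add_zero]

theorem count_blockRep_sep_le {r : ℕ} {x : RSym (Fin 2)} (hx : x ≠ powSym r) (n : ℕ) :
    (blockRep r n ++ [Sum.inr 1]).count x ≤ 1 := by
  have hnodup : (lowDigits n r ++ [Sum.inr 1]).Nodup :=
    (nodup_lowDigits n r).append (List.nodup_singleton _)
      (fun y hy hy' => sep_not_mem_lowDigits ((List.mem_singleton.mp hy') ▸ hy))
  rw [blockRep, List.append_assoc, List.count_append,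
    List.count_eq_zero.mpr (fun h => hx (List.eq_of_mem_replicate h)), Nat.zero_add]
  exact List.nodup_iff_count_le_one.mp hnodup x

end Representation

section Rounds

variable (r : ℕ) (L : List ℕ) (m : ℕ)

theorem head?_sep_cons_ne (w : List (RSym (Fin 2))) :
    (Sum.inr 1 :: w).head? ≠ some (powSym r) := by
  simpa using (powSym_ne_sep r).symm

theorem countNO_roundWord :
    countNO [powSym r, powSym r] (roundWord r L m) =
      (L.map (· / 2 ^ (r + 1))).sum + m / 2 ^ (r + 1) := by
  induction L with
  | nil =>
    simpa [roundWord] using countNO_blockRep_append (n := m) (w := []) (by simp)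
  | cons n L ih =>
    rw [roundWord, List.flatMap_cons, List.append_assoc, List.append_assoc, List.singleton_append,
      countNO_blockRep_append (head?_sep_cons_ne r _), countNO_cons_of_not_prefix
      (by simp [List.cons_prefix_cons, powSym_ne_sep]), ← roundWord, ih]
    simp only [List.map_cons, List.sum_cons]
    omega

theorem replaceNO_roundWord :
    replaceNO [powSym r, powSym r] (powSym (r + 1)) (roundWord r L m) = roundWord (r + 1) L m := by
  induction L with
  | nil =>
    simpa [roundWord] using replaceNO_blockRep_append (n := m) (w := []) (by simp)
  | cons n L ih =>
    rw [roundWord, List.flatMap_cons, List.append_assoc, List.append_assoc, List.singleton_append,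
      replaceNO_blockRep_append (head?_sep_cons_ne r _), replaceNO_cons_of_not_prefix _
      (by simp [List.cons_prefix_cons, powSym_ne_sep]), ← roundWord, ih, roundWord, roundWord,
      List.flatMap_cons]
    simp only [List.append_assoc, List.cons_append, List.nil_append]

theorem count_roundWord_self_le :
    (roundWord r L m).count (powSym r) ≤
      2 * countNO [powSym r, powSym r] (roundWord r L m) + L.length + 1 := by
  rw [countNO_roundWord]
  induction L with
  | nil =>
    simp only [roundWord, List.flatMap_nil, List.nil_append, count_blockRep_self, List.map_nil,
      List.sum_nil, List.length_nil]
    have := div_two_pow_succ m r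
    omega
  | cons n L ih =>
    simp only [roundWord, List.flatMap_cons, List.count_append, count_blockRep_self,
      List.count_singleton, beq_iff_eq, (powSym_ne_sep r).symm, if_false, List.map_cons,
      List.sum_cons, List.length_cons] at ih ⊢
    have := div_two_pow_succ n r
    omega

theorem count_roundWord_le {x : RSym (Fin 2)} (hx : x ≠ powSym r) :
    (roundWord r L m).count x ≤ L.length + 1 := by
  induction L with
  | nil =>
    exact ((List.prefix_append _ _).sublist.count_le x).trans (count_blockRep_sep_le hx m)
  | cons n L ih =>
    rw [roundWord, List.flatMap_cons, List.append_assoc, List.count_append, ← roundWord,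
      List.length_cons]
    have := count_blockRep_sep_le hx n
    omega

theorem powSym_not_mem_of_mem_doublingRules {ρ : List (RSym (Fin 2))}
    (hρ : ρ ∈ doublingRules r) : powSym r ∉ ρ := by
  obtain ⟨j, hj, rfl⟩ := List.mem_map.mp hρ
  simp only [List.mem_cons, List.not_mem_nil, or_false, or_self]
  exact fun h => (List.mem_range.mp hj).ne (powSym_injective h).symm

theorem powSym_not_mem_flatten_doublingRules : powSym r ∉ (doublingRules r).flatten := by
  intro h
  obtain ⟨ρ, hρ, hmem⟩ := List.mem_flatten.mp h
  exact powSym_not_mem_of_mem_doublingRules r hρ hmem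

theorem doublingRules_succ : doublingRules (r + 1) = doublingRules r ++ [[powSym r, powSym r]] := by
  rw [doublingRules, List.range_succ, List.map_append, ← doublingRules, List.map_singleton]

theorem count_flatten_doublingRules_le (x : RSym (Fin 2)) :
    (doublingRules r).flatten.count x ≤ 2 := by
  induction r with
  | zero => simp [doublingRules]
  | succ r ih =>
    rw [doublingRules_succ, List.flatten_append, List.count_append]
    by_cases hx : x = powSym r
    · subst hx
      rw [List.count_eq_zero.mpr (powSym_not_mem_flatten_doublingRules r)]
      simp
    · simp [Ne.symm hx, ih]

end Rounds

theorem RePairStep.eq_roundGrammar_succ {r : ℕ} {L : List ℕ} {m : ℕ} {G' : Grammar (Fin 2)}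
    (hF : L.length + 4 ≤ (L.map (· / 2 ^ (r + 1))).sum + m / 2 ^ (r + 1))
    (h : RePairStep (roundGrammar r L m) G') : G' = roundGrammar (r + 1) L m := by
  have hrules : ∀ ρ ∈ doublingRules r, replaceNO [powSym r, powSym r] (powSym (r + 1)) ρ = ρ ∧
      countNO [powSym r, powSym r] ρ = 0 := fun ρ hρ => by
    have hc := powSym_not_mem_of_mem_doublingRules r hρ
    simpa using And.intro (replaceNO_cons_append_of_not_mem _ (powSym (r + 1)) hc [])
      (countNO_cons_append_of_not_mem _ hc [])
  have hfreq : freq (roundGrammar r L m) [powSym r, powSym r] =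
      countNO [powSym r, powSym r] (roundWord r L m) := by
    rw [freq, roundGrammar, List.map_cons, List.sum_cons, List.map_congr_left
      fun ρ hρ => (hrules ρ hρ).2, List.map_const', List.sum_replicate, smul_zero, Nat.add_zero]
  have hcount (x : RSym (Fin 2)) : (roundGrammar r L m).flatten.count x =
      (roundWord r L m).count x + (doublingRules r).flatten.count x := by
    rw [roundGrammar, List.flatten_cons, List.count_append]
  have hself := count_roundWord_self_le r L m
  rw [countNO_roundWord] at hself hfreq
  rw [RePairStep.eq_replace_pair (c := powSym r) ?self ?other ?two h]
  case self =>
    rw [hcount, List.count_eq_zero.mpr (powSym_not_mem_flatten_doublingRules r), hfreq]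
    omega
  case other =>
    intro x hx
    rw [hcount, hfreq]
    have := count_roundWord_le r L m hx
    have := count_flatten_doublingRules_le r x
    omega
  case two => omega
  have hlen : (roundGrammar r L m).length = r + 1 := by simp [roundGrammar, doublingRules]
  have hX : (Sum.inl (r + 1) : RSym (Fin 2)) = powSym (r + 1) := (if_neg r.succ_ne_zero).symm
  rw [hlen, hX, roundGrammar, List.map_cons, replaceNO_roundWord,
    List.map_congr_left fun ρ hρ => (hrules ρ hρ).1, List.map_id'' fun _ => rfl, roundGrammar,
    doublingRules_succ, List.cons_append]

def blockLengths (N : ℕ → ℕ) (k : ℕ) : List ℕ := (List.range (k - 1)).map fun j => N (j + 1)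

theorem rePairInit_blockWord_eq_roundGrammar (N : ℕ → ℕ) (k : ℕ) :
    RePairInit (blockWord N k) = roundGrammar 0 (blockLengths N k) (N k) := by
  simp [RePairInit, roundGrammar, roundWord, doublingRules, blockWord, blockLengths, blockRep,
    lowDigits, powSym, List.map_flatMap, List.flatMap_map]

theorem length_add_four_le_sum_div_blockLengths {k r : ℕ} {N : ℕ → ℕ}
    (hbound : ∀ i, 1 ≤ i → i ≤ k → 2 ^ (k + i - 1) ≤ N i) (hr : r + 2 ≤ k) :
    (blockLengths N k).length + 4 ≤
      ((blockLengths N k).map (· / 2 ^ (r + 1))).sum + N k / 2 ^ (r + 1) := by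
  have hdiv {c e i : ℕ} (he : r + 1 + e ≤ k + i - 1) (hi : 1 ≤ i) (hik : i ≤ k) (hc : c ≤ 2 ^ e) :
      c ≤ N i / 2 ^ (r + 1) := by
    rw [Nat.le_div_iff_mul_le (by positivity)]
    calc c * 2 ^ (r + 1) ≤ 2 ^ e * 2 ^ (r + 1) := Nat.mul_le_mul_right _ hc
      _ = 2 ^ (r + 1 + e) := by ring
      _ ≤ 2 ^ (k + i - 1) := Nat.pow_le_pow_right (by norm_num) he
      _ ≤ N i := hbound i hi hik
  have hmid := List.card_nsmul_le_sum ((blockLengths N k).map (· / 2 ^ (r + 1))) 2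
    fun x hx => by
      simp only [blockLengths, List.map_map, List.mem_map, List.mem_range,
        Function.comp_apply] at hx
      obtain ⟨j, hj, rfl⟩ := hx
      exact hdiv (e := 1) (by omega) (by omega) (by omega) le_rfl
  rw [List.length_map, smul_eq_mul] at hmid
  have hlast : 4 ≤ N k / 2 ^ (r + 1) := hdiv (e := 2) (by omega) (by omega) le_rfl (by norm_num)
  omega

theorem repair_stmt_12_general (k : ℕ) (N : ℕ → ℕ)
    (hbound : ∀ i, 1 ≤ i → i ≤ k → 2 ^ (k + i - 1) ≤ N i ∧ N i < 2 ^ (k + i)) :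
    ∀ r, r ≤ k - 1 → ∀ G : Grammar (Fin 2),
      RePairSteps r (RePairInit (blockWord N k)) G →
      G.length = r + 1 ∧
      G.tail = (List.range r).map (fun j =>
        if j = 0 then ([Sum.inr 0, Sum.inr 0] : List (RSym (Fin 2)))
        else [Sum.inl j, Sum.inl j]) := by
  intro r hr G hG
  rw [rePairInit_blockWord_eq_roundGrammar] at hG
  have hF {s : ℕ} (hs : s < k - 1) := length_add_four_le_sum_div_blockLengths (r := s)
    (fun i hi hik => (hbound i hi hik).1) (by omega)
  obtain rfl := RePairSteps.eq_of_forced (f := fun s => roundGrammar s (blockLengths N k) (N k))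
    (fun s hs _ h => RePairStep.eq_roundGrammar_succ (hF hs) h) hr hG
  refine ⟨by simp [roundGrammar, doublingRules], List.map_congr_left fun j _ => ?_⟩
  unfold powSym
  split_ifs <;> rfl

/-- For `s_k = a^{N 1} b ⋯ b a^{N k}` with `N 1 < ⋯ < N k` and
`2^{k+i-1} ≤ N i < 2^{k+i}`, during the first `k - 1` rounds RePair introduces exactly
the rules `X 1 → aa` and `X i → X (i-1) X (i-1)` (`2 ≤ i ≤ k - 1`); in particular the
letter `b` never participates in a replaced maximal string during these rounds. -/
theorem repair_stmt_12 (k : ℕ) (hk : 2 ≤ k) (N : ℕ → ℕ)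
    (hmono : ∀ i, 1 ≤ i → i < k → N i < N (i + 1))
    (hbound : ∀ i, 1 ≤ i → i ≤ k → 2 ^ (k + i - 1) ≤ N i ∧ N i < 2 ^ (k + i)) :
    ∀ r, r ≤ k - 1 → ∀ G : Grammar (Fin 2),
      RePairSteps r (RePairInit (blockWord N k)) G →
      G.length = r + 1 ∧
      G.tail = (List.range r).map (fun j =>
        if j = 0 then ([Sum.inr 0, Sum.inr 0] : List (RSym (Fin 2)))
        else [Sum.inl j, Sum.inl j]) :=
  repair_stmt_12_general k N hbound
end
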